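/- (Theorem 1, combined bound.) Let a, b ∈ ℝ^d, let W_pre, W_exact be d×C real matrices, and let Û, U* ∈ ℝ^{d×s} have orthonormal columns. Suppose ‖a − b‖₂ ≤ ε_d, ‖b‖₂ ≤ ε_exact, ‖U*U*ᵀ − ÛÛᵀ‖_F ≤ ε_opt, ‖W_pre‖₂ ≤ L_pre, ‖W_exact‖₂ ≤ L_exact, ‖W_pre − W_exact‖₂ ≤ ε_W, and that either ‖(I − U*U*ᵀ) b‖₂ ≤ ε_rm (remaining-data case) or ‖U*U*ᵀ b‖₂ ≤ ε_fg (forgetting-data case). Then ‖W_preᵀ ÛÛᵀ a − W_exactᵀ b‖₂ ≤ L_pre (ε_d + max(ε_fg, ε_rm) + ε_opt ε_exact) + ε_exact · max(L_exact, ε_W). -/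

import Mathlib

open Matrix

/-- The Euclidean (ℓ²) norm of a vector in `ℝ^n`. -/
noncomputable def eNorm {n : ℕ} (v : Fin n → ℝ) : ℝ := Real.sqrt (∑ i, v i ^ 2)

/-- The Frobenius norm of a real matrix. -/
noncomputable def fNorm {m n : ℕ} (A : Matrix (Fin m) (Fin n) ℝ) : ℝ :=
  Real.sqrt (∑ i, ∑ j, A i j ^ 2)

/-- The spectral (ℓ² operator) norm of a real matrix. -/
noncomputable def sNorm {m n : ℕ} (A : Matrix (Fin m) (Fin n) ℝ) : ℝ :=
  sSup {c : ℝ | ∃ v : Fin n → ℝ, eNorm v ≤ 1 ∧ c = eNorm (A.mulVec v)}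

lemma eNorm_nonneg {n : ℕ} (v : Fin n → ℝ) : 0 ≤ eNorm v := Real.sqrt_nonneg _

lemma eNorm_zero {n : ℕ} : eNorm (0 : Fin n → ℝ) = 0 := by simp [eNorm]

lemma eNorm_sq {n : ℕ} (v : Fin n → ℝ) : eNorm v ^ 2 = v ⬝ᵥ v := by
  rw [eNorm, Real.sq_sqrt (Finset.sum_nonneg fun i _ => sq_nonneg _)]
  simp [dotProduct, sq]

lemma dot_le {n : ℕ} (x y : Fin n → ℝ) : x ⬝ᵥ y ≤ eNorm x * eNorm y := by
  have h := Finset.sum_mul_sq_le_sq_mul_sq Finset.univ x y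
  have hd : x ⬝ᵥ y = ∑ i, x i * y i := rfl
  have hxx : x ⬝ᵥ x = ∑ i, x i ^ 2 := by simp [dotProduct, sq]
  have hyy : y ⬝ᵥ y = ∑ i, y i ^ 2 := by simp [dotProduct, sq]
  have hx2 : eNorm x ^ 2 = ∑ i, x i ^ 2 := by rw [eNorm_sq, hxx]
  have hy2 : eNorm y ^ 2 = ∑ i, y i ^ 2 := by rw [eNorm_sq, hyy]
  rcases le_or_gt (x ⬝ᵥ y) 0 with h0 | h0
  · exact h0.trans (mul_nonneg (eNorm_nonneg x) (eNorm_nonneg y))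
  · have hprod : (x ⬝ᵥ y) ^ 2 ≤ (eNorm x * eNorm y) ^ 2 := by
      rw [mul_pow, hx2, hy2, hd]; exact h
    nlinarith [mul_nonneg (eNorm_nonneg x) (eNorm_nonneg y)]

lemma eNorm_add_le {n : ℕ} (x y : Fin n → ℝ) : eNorm (x + y) ≤ eNorm x + eNorm y := by
  have h1 : eNorm (x + y) ^ 2 ≤ (eNorm x + eNorm y) ^ 2 := by
    rw [eNorm_sq]
    have hxy : (x + y) ⬝ᵥ (x + y) = x ⬝ᵥ x + 2 * (x ⬝ᵥ y) + y ⬝ᵥ y := by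
      simp [add_dotProduct, dotProduct_add, dotProduct_comm y x]; ring
    nlinarith [dot_le x y, eNorm_sq x, eNorm_sq y]
  have h2 : 0 ≤ eNorm x + eNorm y := add_nonneg (eNorm_nonneg x) (eNorm_nonneg y)
  nlinarith [eNorm_nonneg (x + y)]

lemma eNorm_neg {n : ℕ} (x : Fin n → ℝ) : eNorm (-x) = eNorm x := by
  simp [eNorm]

lemma eNorm_sub_le {n : ℕ} (x y : Fin n → ℝ) : eNorm (x - y) ≤ eNorm x + eNorm y := by
  rw [sub_eq_add_neg]
  exact (eNorm_add_le x (-y)).trans (by rw [eNorm_neg])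

lemma eNorm_smul {n : ℕ} (c : ℝ) (v : Fin n → ℝ) : eNorm (c • v) = |c| * eNorm v := by
  simp only [eNorm, Pi.smul_apply, smul_eq_mul, mul_pow]
  rw [← Finset.mul_sum, Real.sqrt_mul (sq_nonneg c), Real.sqrt_sq_eq_abs]

lemma eNorm_eq_zero {n : ℕ} {v : Fin n → ℝ} (h : eNorm v = 0) : v = 0 := by
  have hs : (∑ i, v i ^ 2) = 0 := by
    have h' := Real.sqrt_eq_zero'.mp h
    have hnn : 0 ≤ ∑ i, v i ^ 2 := Finset.sum_nonneg fun i _ => sq_nonneg _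
    linarith
  funext i
  have := (Finset.sum_eq_zero_iff_of_nonneg (fun i _ => sq_nonneg (v i))).mp hs i (Finset.mem_univ i)
  exact pow_eq_zero_iff (by norm_num) |>.mp this

lemma fNorm_nonneg {m n : ℕ} (A : Matrix (Fin m) (Fin n) ℝ) : 0 ≤ fNorm A := Real.sqrt_nonneg _

lemma eNorm_mulVec_le_fNorm {m n : ℕ} (A : Matrix (Fin m) (Fin n) ℝ) (v : Fin n → ℝ) :
    eNorm (A.mulVec v) ≤ fNorm A * eNorm v := by
  have key : (∑ i, (A.mulVec v) i ^ 2) ≤ (∑ i, ∑ j, A i j ^ 2) * ∑ j, v j ^ 2 := by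
    rw [Finset.sum_mul]
    apply Finset.sum_le_sum
    intro i _
    exact Finset.sum_mul_sq_le_sq_mul_sq Finset.univ (A i) v
  calc eNorm (A.mulVec v) = Real.sqrt (∑ i, (A.mulVec v) i ^ 2) := rfl
    _ ≤ Real.sqrt ((∑ i, ∑ j, A i j ^ 2) * ∑ j, v j ^ 2) := Real.sqrt_le_sqrt key
    _ = fNorm A * eNorm v := by
        rw [Real.sqrt_mul (show (0:ℝ) ≤ ∑ i, ∑ j, A i j ^ 2 from Finset.sum_nonneg fun i _ => Finset.sum_nonneg fun j _ => sq_nonneg _)]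
        rfl

lemma sNorm_bddAbove {m n : ℕ} (A : Matrix (Fin m) (Fin n) ℝ) :
    BddAbove {c : ℝ | ∃ v : Fin n → ℝ, eNorm v ≤ 1 ∧ c = eNorm (A.mulVec v)} := by
  refine ⟨fNorm A, ?_⟩
  rintro c ⟨v, hv, rfl⟩
  calc eNorm (A.mulVec v) ≤ fNorm A * eNorm v := eNorm_mulVec_le_fNorm A v
    _ ≤ fNorm A * 1 := by exact mul_le_mul_of_nonneg_left hv (fNorm_nonneg A)
    _ = fNorm A := mul_one _

lemma sNorm_nonneg {m n : ℕ} (A : Matrix (Fin m) (Fin n) ℝ) : 0 ≤ sNorm A := by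
  have : (0 : ℝ) ∈ {c : ℝ | ∃ v : Fin n → ℝ, eNorm v ≤ 1 ∧ c = eNorm (A.mulVec v)} :=
    ⟨0, by simp [eNorm_zero], by simp [eNorm_zero]⟩
  exact le_csSup (sNorm_bddAbove A) this

lemma eNorm_mulVec_le_sNorm {m n : ℕ} (A : Matrix (Fin m) (Fin n) ℝ) (v : Fin n → ℝ) :
    eNorm (A.mulVec v) ≤ sNorm A * eNorm v := by
  rcases eq_or_lt_of_le (eNorm_nonneg v) with h0 | h0
  · rw [eNorm_eq_zero h0.symm]
    simp [eNorm_zero, ← h0]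
  · set c := (eNorm v)⁻¹ with hc
    have hc0 : 0 < c := inv_pos.mpr h0
    have hu : eNorm (c • v) = 1 := by
      rw [eNorm_smul, abs_of_pos hc0, hc, inv_mul_cancel₀ (ne_of_gt h0)]
    have hmem : eNorm (A.mulVec (c • v)) ∈
        {c : ℝ | ∃ v : Fin n → ℝ, eNorm v ≤ 1 ∧ c = eNorm (A.mulVec v)} :=
      ⟨c • v, le_of_eq hu, rfl⟩
    have hle : eNorm (A.mulVec (c • v)) ≤ sNorm A := le_csSup (sNorm_bddAbove A) hmem
    rw [Matrix.mulVec_smul, eNorm_smul, abs_of_pos hc0] at hle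
    rw [hc] at hle
    calc eNorm (A.mulVec v) = eNorm v * ((eNorm v)⁻¹ * eNorm (A.mulVec v)) := by
          field_simp
      _ ≤ eNorm v * sNorm A := mul_le_mul_of_nonneg_left hle (le_of_lt h0)
      _ = sNorm A * eNorm v := mul_comm _ _

lemma eNorm_transpose_mulVec_le {m n : ℕ} (A : Matrix (Fin m) (Fin n) ℝ) (v : Fin m → ℝ) :
    eNorm (Aᵀ.mulVec v) ≤ sNorm A * eNorm v := by
  set w := Aᵀ.mulVec v with hw
  have key : eNorm w ^ 2 ≤ eNorm (A.mulVec w) * eNorm v := by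
    have h1 : eNorm w ^ 2 = w ⬝ᵥ w := eNorm_sq w
    have h2 : w ⬝ᵥ w = v ⬝ᵥ A.mulVec w := by
      rw [hw, Matrix.mulVec_transpose, Matrix.dotProduct_mulVec]
    have h3 : v ⬝ᵥ A.mulVec w ≤ eNorm v * eNorm (A.mulVec w) := dot_le _ _
    rw [h1, h2]; linarith [h3]
  have h4 : eNorm (A.mulVec w) ≤ sNorm A * eNorm w := eNorm_mulVec_le_sNorm A w
  rcases eq_or_lt_of_le (eNorm_nonneg w) with h0 | h0
  · rw [← h0]; exact mul_nonneg (sNorm_nonneg A) (eNorm_nonneg v)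
  · nlinarith [eNorm_nonneg v, sNorm_nonneg A]

lemma proj_contraction {d s : ℕ} (U : Matrix (Fin d) (Fin s) ℝ) (hU : Uᵀ * U = 1)
    (x : Fin d → ℝ) : eNorm ((U * Uᵀ).mulVec x) ≤ eNorm x := by
  set P := U * Uᵀ with hP
  have hPT : Pᵀ = P := by rw [hP, Matrix.transpose_mul, Matrix.transpose_transpose]
  have hPP : P * P = P := by
    rw [hP]
    rw [Matrix.mul_assoc U Uᵀ (U * Uᵀ), ← Matrix.mul_assoc Uᵀ U Uᵀ, hU, Matrix.one_mul]
  set t := eNorm (P.mulVec x) with ht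
  have key : t ^ 2 ≤ t * eNorm x := by
    have h1 : t ^ 2 = P.mulVec x ⬝ᵥ P.mulVec x := eNorm_sq _
    have h2 : P.mulVec x ⬝ᵥ P.mulVec x = P.mulVec (P.mulVec x) ⬝ᵥ x := by
      rw [Matrix.dotProduct_mulVec, ← Matrix.mulVec_transpose, hPT, dotProduct_comm]
    have h3 : P.mulVec (P.mulVec x) = P.mulVec x := by
      rw [Matrix.mulVec_mulVec, hPP]
    rw [h1, h2, h3]
    exact dot_le _ _
  rcases eq_or_lt_of_le (eNorm_nonneg (P.mulVec x)) with h0 | h0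
  · rw [← ht] at h0; linarith [eNorm_nonneg x]
  · rw [← ht] at h0; nlinarith

/-- Theorem 1, combined bound: with `a = g_pre(x)`, `b = g_exact(x)`, under the hypotheses
`‖a − b‖₂ ≤ ε_d`, `‖b‖₂ ≤ ε_exact`, `‖U*U*ᵀ − ÛÛᵀ‖_F ≤ ε_opt`, `‖W_pre‖₂ ≤ L_pre`,
`‖W_exact‖₂ ≤ L_exact`, `‖W_pre − W_exact‖₂ ≤ ε_W`, and either
`‖(I − U*U*ᵀ) b‖₂ ≤ ε_rm` (remaining data) or `‖U*U*ᵀ b‖₂ ≤ ε_fg` (forgetting data),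
the output gap satisfies
`‖W_preᵀ ÛÛᵀ a − W_exactᵀ b‖₂
  ≤ L_pre (ε_d + max(ε_fg, ε_rm) + ε_opt ε_exact) + ε_exact · max(L_exact, ε_W)`. -/
theorem unlearned_output_gap_combined
    {d s C : ℕ}
    (a b : Fin d → ℝ)
    (Wpre Wexact : Matrix (Fin d) (Fin C) ℝ)
    (Uhat Ustar : Matrix (Fin d) (Fin s) ℝ)
    (hUhat : Uhatᵀ * Uhat = 1) (hUstar : Ustarᵀ * Ustar = 1)
    (εd εexact εrm εfg εopt εW Lpre Lexact : ℝ)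
    (hεd : 0 ≤ εd) (hεexact : 0 ≤ εexact) (hεrm : 0 ≤ εrm) (hεfg : 0 ≤ εfg)
    (hεopt : 0 ≤ εopt) (hεW : 0 ≤ εW) (hLpre : 0 ≤ Lpre) (hLexact : 0 ≤ Lexact)
    (h1 : eNorm (a - b) ≤ εd)
    (h2 : eNorm b ≤ εexact)
    (h3 : fNorm (Ustar * Ustarᵀ - Uhat * Uhatᵀ) ≤ εopt)
    (h4 : sNorm Wpre ≤ Lpre)
    (h5 : sNorm Wexact ≤ Lexact)
    (h6 : sNorm (Wpre - Wexact) ≤ εW)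
    (h7 : eNorm ((1 - Ustar * Ustarᵀ).mulVec b) ≤ εrm ∨
          eNorm ((Ustar * Ustarᵀ).mulVec b) ≤ εfg) :
    eNorm (Wpreᵀ.mulVec ((Uhat * Uhatᵀ).mulVec a) - Wexactᵀ.mulVec b)
      ≤ Lpre * (εd + max εfg εrm + εopt * εexact) + εexact * max Lexact εW := by
  set P := Uhat * Uhatᵀ with hPdef
  set Q := Ustar * Ustarᵀ with hQdef
  have hv1 : eNorm (P.mulVec (a - b)) ≤ εd :=
    (proj_contraction Uhat hUhat (a - b)).trans h1
  have hv2 : eNorm ((Q - P).mulVec b) ≤ εopt * εexact :=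
    (eNorm_mulVec_le_fNorm _ b).trans (mul_le_mul h3 h2 (eNorm_nonneg b) hεopt)
  have hWb : eNorm ((Wpre - Wexact)ᵀ.mulVec b) ≤ εW * εexact :=
    (eNorm_transpose_mulVec_le _ b).trans (mul_le_mul h6 h2 (eNorm_nonneg b) hεW)
  have hWexb : eNorm (Wexactᵀ.mulVec b) ≤ Lexact * εexact :=
    (eNorm_transpose_mulVec_le _ b).trans (mul_le_mul h5 h2 (eNorm_nonneg b) hLexact)
  rcases h7 with hrm | hfg
  · -- remaining-data case
    have hdecomp : P.mulVec a - b =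
        P.mulVec (a - b) - (Q - P).mulVec b - (1 - Q).mulVec b := by
      simp only [Matrix.mulVec_sub, Matrix.sub_mulVec, Matrix.one_mulVec]
      abel
    have hmid : eNorm (P.mulVec a - b) ≤ εd + εopt * εexact + εrm := by
      rw [hdecomp]
      have t1 := eNorm_sub_le (P.mulVec (a - b) - (Q - P).mulVec b) ((1 - Q).mulVec b)
      have t2 := eNorm_sub_le (P.mulVec (a - b)) ((Q - P).mulVec b)
      linarith
    have hsplit : Wpreᵀ.mulVec (P.mulVec a) - Wexactᵀ.mulVec b =
        Wpreᵀ.mulVec (P.mulVec a - b) + (Wpre - Wexact)ᵀ.mulVec b := by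
      simp only [Matrix.mulVec_sub, Matrix.sub_mulVec, Matrix.transpose_sub]
      abel
    have h1' : eNorm (Wpreᵀ.mulVec (P.mulVec a - b)) ≤ Lpre * (εd + εopt * εexact + εrm) :=
      (eNorm_transpose_mulVec_le _ _).trans (mul_le_mul h4 hmid (eNorm_nonneg _) hLpre)
    rw [hsplit]
    have hfin := (eNorm_add_le (Wpreᵀ.mulVec (P.mulVec a - b))
      ((Wpre - Wexact)ᵀ.mulVec b)).trans (add_le_add h1' hWb)
    nlinarith [mul_nonneg hLpre (sub_nonneg.mpr (le_max_right εfg εrm)),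
      mul_nonneg hεexact (sub_nonneg.mpr (le_max_right Lexact εW))]
  · -- forgetting-data case
    have hdecomp : P.mulVec a =
        P.mulVec (a - b) - (Q - P).mulVec b + Q.mulVec b := by
      simp only [Matrix.mulVec_sub, Matrix.sub_mulVec]
      abel
    have hmid : eNorm (P.mulVec a) ≤ εd + εopt * εexact + εfg := by
      rw [hdecomp]
      have t1 := eNorm_add_le (P.mulVec (a - b) - (Q - P).mulVec b) (Q.mulVec b)
      have t2 := eNorm_sub_le (P.mulVec (a - b)) ((Q - P).mulVec b)
      linarith
    have h1' : eNorm (Wpreᵀ.mulVec (P.mulVec a)) ≤ Lpre * (εd + εopt * εexact + εfg) :=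
      (eNorm_transpose_mulVec_le _ _).trans (mul_le_mul h4 hmid (eNorm_nonneg _) hLpre)
    have hfin := (eNorm_sub_le (Wpreᵀ.mulVec (P.mulVec a))
      (Wexactᵀ.mulVec b)).trans (add_le_add h1' hWexb)
    nlinarith [mul_nonneg hLpre (sub_nonneg.mpr (le_max_left εfg εrm)),
      mul_nonneg hεexact (sub_nonneg.mpr (le_max_left Lexact εW))]
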